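/- Let m, k be natural numbers and x, r positive real numbers. Then the series Σ_{n=0}^∞ ((-x r)^n / n!) · ₂F₀(-(m+k), -n; -1/r²) · J_{k-n}(2 x r) converges and equals ((m+k)! / (m! k!)) · (x/r)^k · Φ(-m, 1+k; x²). -/

import Mathlib

/-- Terminating hypergeometric sum ₂F₀(-p, -q; c)
    = Σ_{j=0}^{min(p,q)} (choose p j)(choose q j) j! c^j. -/
noncomputable def twoFzero (p q : ℕ) (c : ℝ) : ℝ :=
  ∑ j ∈ Finset.range (min p q + 1),
    (p.choose j : ℝ) * (q.choose j : ℝ) * (Nat.factorial j : ℝ) * c ^ j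

/-- Terminating Kummer function Φ(-p, 1+k; t)
    = Σ_{j=0}^{p} (-1)^j (choose p j) t^j / (k+1)_j. -/
noncomputable def kummerPhi (p k : ℕ) (t : ℝ) : ℝ :=
  ∑ j ∈ Finset.range (p + 1),
    (-1 : ℝ) ^ j * (p.choose j : ℝ) * t ^ j / ((ascPochhammer ℝ j).eval ((k : ℝ) + 1))

/-- Bessel function of the first kind of natural order:
    J_k(x) = Σ_{j=0}^∞ (-1)^j (x/2)^{k+2j} / (j! (k+j)!). -/
noncomputable def besselJnat (k : ℕ) (x : ℝ) : ℝ :=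
  ∑' j : ℕ,
    (-1 : ℝ) ^ j * (x / 2) ^ (k + 2 * j) /
      ((Nat.factorial j : ℝ) * (Nat.factorial (k + j) : ℝ))

/-- Bessel function of the first kind of integer order:
    J_ν for ν ≥ 0 is `besselJnat`, and J_{-p}(x) = (-1)^p J_p(x). -/
noncomputable def besselJint (ν : ℤ) (x : ℝ) : ℝ :=
  if 0 ≤ ν then besselJnat ν.toNat x else (-1 : ℝ) ^ (-ν).toNat * besselJnat (-ν).toNat x

open Finset
set_option maxHeartbeats 1000000

namespace AdditionAux

lemma besselJnat_summable (ν : ℕ) (y : ℝ) :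
    Summable (fun j : ℕ => (-1:ℝ)^j * (y/2)^(ν+2*j) / ((Nat.factorial j : ℝ) * (Nat.factorial (ν+j) : ℝ))) := by
  apply Summable.of_norm_bounded (g := fun j => |y/2|^ν * ((|y/2|^2)^j / (Nat.factorial j : ℝ)))
  · exact (Real.summable_pow_div_factorial _).mul_left _
  · intro j
    have h1 : (0:ℝ) < (Nat.factorial j : ℝ) := by positivity
    have h2 : (0:ℝ) < (Nat.factorial (ν+j) : ℝ) := by positivity
    rw [Real.norm_eq_abs, abs_div, abs_mul, abs_pow, abs_pow, abs_neg, abs_one, one_pow, one_mul,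
      abs_mul, abs_of_pos h1, abs_of_pos h2, pow_add, pow_mul]
    rw [mul_div_assoc']
    apply div_le_div_of_nonneg_left (by positivity) h1
    exact le_mul_of_one_le_right h1.le
      (by exact_mod_cast Nat.one_le_iff_ne_zero.mpr (Nat.factorial_ne_zero _))

lemma besselJnat_hasSum (ν : ℕ) (y : ℝ) :
    HasSum (fun j : ℕ => (-1:ℝ)^j * (y/2)^(ν+2*j) / ((Nat.factorial j : ℝ) * (Nat.factorial (ν+j) : ℝ)))
      (besselJnat ν y) :=
  (besselJnat_summable ν y).hasSum

/-- summand of the uniform Bessel representation -/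
noncomputable def gg (k : ℕ) (x r : ℝ) (n l : ℕ) : ℝ :=
  if n ≤ k + l then
    (-1:ℝ)^l * (x*r)^(k + 2*l - n) / ((Nat.factorial l : ℝ) * (Nat.factorial (k + l - n) : ℝ))
  else 0

lemma gg_hasSum (k : ℕ) (x r : ℝ) (n : ℕ) :
    HasSum (gg k x r n) (besselJint ((k:ℤ) - (n:ℤ)) (2*x*r)) := by
  have hy : (2*x*r)/2 = x*r := by ring
  by_cases hkn : n ≤ k
  · have h0 : (0:ℤ) ≤ (k:ℤ) - (n:ℤ) := by omega
    rw [besselJint, if_pos h0]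
    have htn : ((k:ℤ) - (n:ℤ)).toNat = k - n := by omega
    rw [htn]
    have := besselJnat_hasSum (k - n) (2*x*r)
    rw [hy] at this
    convert this using 2 with l
    unfold gg
    rw [if_pos (by omega)]
    congr 2
    · congr 1
      omega
    · congr 2
      omega
  · push_neg at hkn
    have h0 : ¬ (0:ℤ) ≤ (k:ℤ) - (n:ℤ) := by omega
    rw [besselJint, if_neg h0]
    have htn : (-((k:ℤ) - (n:ℤ))).toNat = n - k := by omega
    rw [htn]
    have hb := (besselJnat_hasSum (n - k) (2*x*r)).mul_left ((-1:ℝ)^(n-k))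
    rw [hy] at hb
    rw [← Function.Injective.hasSum_iff (g := fun j => j + (n - k)) (add_left_injective (n-k)) ?_]
    · have hfun : ((gg k x r n) ∘ fun j => j + (n - k))
          = fun j => (-1:ℝ)^(n-k) * ((-1)^j * (x*r)^((n-k)+2*j)
            / ((Nat.factorial j : ℝ) * (Nat.factorial ((n-k)+j) : ℝ))) := by
        funext j
        show gg k x r n (j + (n-k)) = _
        unfold gg
        rw [if_pos (by omega)]
        have he : k + 2*(j + (n-k)) - n = (n-k) + 2*j := by omega
        have hf1 : k + (j + (n-k)) - n = j := by omega
        rw [he, hf1, pow_add]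
        have h2 : j + (n - k) = (n - k) + j := by omega
        rw [h2]
        ring
      rw [hfun]
      exact hb
    · intro l hl
      simp only [Set.range, Set.mem_setOf_eq, not_exists] at hl
      have hlk : l < n - k := by
        by_contra h
        push_neg at h
        exact hl (l - (n-k)) (by omega)
      unfold gg
      rw [if_neg (by omega)]

noncomputable def AA (p : ℕ) (x r : ℝ) (n j : ℕ) : ℝ :=
  (-(x*r))^n / (Nat.factorial n : ℝ) *
    ((p.choose j : ℝ) * (n.choose j : ℝ) * (Nat.factorial j : ℝ) * (-1/r^2)^j)

noncomputable def FF (p k : ℕ) (x r : ℝ) (q : ℕ × ℕ × ℕ) : ℝ :=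
  AA p x r q.1 q.2.1 * gg k x r q.1 q.2.2

noncomputable def TT (p k : ℕ) (x r : ℝ) (j l : ℕ) : ℝ :=
  if k + l = j then
    (-1:ℝ)^l * (p.choose j : ℝ) * (x*r)^(k+2*l) * ((r^2)⁻¹)^j / (Nat.factorial l : ℝ)
  else 0

lemma FF_summable (p k : ℕ) {x r : ℝ} (hx : 0 < x) (hr : 0 < r) :
    Summable (FF p k x r) := by
  set y : ℝ := x * r with hy
  have hy0 : 0 < y := mul_pos hx hr
  apply Summable.of_norm_bounded
    (g := fun q : ℕ × ℕ × ℕ => (1 / (Nat.factorial (q.1 - p) : ℝ)) *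
      (((p.choose q.2.1 : ℝ) * ((r^2)⁻¹)^q.2.1) *
        (y^k * ((y^2)^q.2.2 / (Nat.factorial q.2.2 : ℝ)))))
  · have hB1 : Summable (fun n : ℕ => 1 / (Nat.factorial (n - p) : ℝ)) := by
      rw [← summable_nat_add_iff p]
      have := Real.summable_pow_div_factorial 1
      apply this.congr
      intro n
      simp [Nat.add_sub_cancel]
    have hB2 : Summable (fun j : ℕ => (p.choose j : ℝ) * ((r^2)⁻¹)^j) := by
      apply summable_of_ne_finset_zero (s := Finset.range (p+1))
      intro j hj
      simp only [Finset.mem_range, not_lt] at hj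
      rw [Nat.choose_eq_zero_of_lt (by omega)]
      simp
    have hB3 : Summable (fun l : ℕ => y^k * ((y^2)^l / (Nat.factorial l : ℝ))) :=
      (Real.summable_pow_div_factorial _).mul_left _
    have hB23 : Summable (fun q : ℕ × ℕ => ((p.choose q.1 : ℝ) * ((r^2)⁻¹)^q.1) *
        (y^k * ((y^2)^q.2 / (Nat.factorial q.2 : ℝ)))) := by
      apply Summable.mul_of_nonneg hB2 hB3
      · intro j; positivity
      · intro l; positivity
    exact Summable.mul_of_nonneg hB1 hB23 (fun n => by positivity) (fun q => by positivity)
  · rintro ⟨n, j, l⟩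
    unfold FF
    simp only
    by_cases hg : n ≤ k + l
    · by_cases hjp : j ≤ p
      · have hAA : ‖AA p x r n j‖ = y^n / (Nat.factorial n : ℝ) *
            ((p.choose j : ℝ) * (n.choose j : ℝ) * (Nat.factorial j : ℝ) * ((r^2)⁻¹)^j) := by
          unfold AA
          rw [hy]
          simp only [Real.norm_eq_abs, abs_mul, abs_div, abs_pow, abs_neg, abs_one,
            Nat.abs_cast, abs_of_pos hx, abs_of_pos hr, one_div]
        have hgg : ‖gg k x r n l‖ = y^(k+2*l-n) / ((Nat.factorial l : ℝ) * (Nat.factorial (k + l - n) : ℝ)) := by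
          unfold gg
          rw [if_pos hg, hy]
          simp only [Real.norm_eq_abs, abs_mul, abs_div, abs_pow, abs_neg, abs_one,
            Nat.abs_cast, abs_of_pos hx, abs_of_pos hr, one_pow, one_mul]
        rw [norm_mul, hAA, hgg]
        have hpow : y^n * y^(k+2*l-n) = y^k * (y^2)^l := by
          rw [← pow_add, ← pow_mul, ← pow_add]
          congr 1
          omega
        have hfac : (n.choose j : ℝ) * (Nat.factorial j : ℝ) / (Nat.factorial n : ℝ)
            ≤ 1 / (Nat.factorial (n - p) : ℝ) := by
          rw [div_le_div_iff₀ (by positivity) (by positivity)]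
          have hnat : n.choose j * Nat.factorial j * Nat.factorial (n - p) ≤ Nat.factorial n := by
            by_cases hjn : j ≤ n
            · calc n.choose j * Nat.factorial j * Nat.factorial (n - p)
                  ≤ n.choose j * Nat.factorial j * Nat.factorial (n - j) := by
                    apply Nat.mul_le_mul_left
                    exact Nat.factorial_le (by omega)
                _ = Nat.factorial n := Nat.choose_mul_factorial_mul_factorial hjn
            · rw [Nat.choose_eq_zero_of_lt (by omega)]
              simp [Nat.one_le_iff_ne_zero.mpr (Nat.factorial_ne_zero n)]
          calc (n.choose j : ℝ) * (Nat.factorial j : ℝ) * (Nat.factorial (n-p) : ℝ)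
              = ((n.choose j * Nat.factorial j * Nat.factorial (n - p) : ℕ) : ℝ) := by push_cast; ring
            _ ≤ ((Nat.factorial n : ℕ) : ℝ) := by exact_mod_cast hnat
            _ = 1 * (Nat.factorial n : ℝ) := by rw [one_mul]
        have h1 : (0:ℝ) < Nat.factorial (k+l-n) := by positivity
        calc y^n / (Nat.factorial n : ℝ) *
              ((p.choose j : ℝ) * (n.choose j : ℝ) * (Nat.factorial j : ℝ) * ((r^2)⁻¹)^j) *
              (y^(k+2*l-n) / ((Nat.factorial l : ℝ) * (Nat.factorial (k + l - n) : ℝ)))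
            ≤ y^n / (Nat.factorial n : ℝ) *
              ((p.choose j : ℝ) * (n.choose j : ℝ) * (Nat.factorial j : ℝ) * ((r^2)⁻¹)^j) *
              (y^(k+2*l-n) / ((Nat.factorial l : ℝ) * 1)) := by
              apply mul_le_mul_of_nonneg_left _ (by positivity)
              apply div_le_div_of_nonneg_left (by positivity) (by positivity)
              apply mul_le_mul_of_nonneg_left _ (by positivity)
              exact_mod_cast Nat.one_le_iff_ne_zero.mpr (Nat.factorial_ne_zero _)
          _ = ((n.choose j : ℝ) * (Nat.factorial j : ℝ) / (Nat.factorial n : ℝ)) *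
              ((p.choose j : ℝ) * ((r^2)⁻¹)^j * (y^n * y^(k+2*l-n) / (Nat.factorial l : ℝ))) := by
              ring
          _ ≤ (1 / (Nat.factorial (n - p) : ℝ)) *
              ((p.choose j : ℝ) * ((r^2)⁻¹)^j * (y^n * y^(k+2*l-n) / (Nat.factorial l : ℝ))) := by
              apply mul_le_mul_of_nonneg_right hfac (by positivity)
          _ = (1 / (Nat.factorial (n - p) : ℝ)) *
              (((p.choose j : ℝ) * ((r^2)⁻¹)^j) * (y^k * ((y^2)^l / (Nat.factorial l : ℝ)))) := by
              rw [hpow]; ring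
      · push_neg at hjp
        unfold AA
        rw [Nat.choose_eq_zero_of_lt hjp]
        simp only [Nat.cast_zero, zero_mul, mul_zero, zero_mul, norm_zero]
        positivity
    · unfold gg
      rw [if_neg hg]
      simp only [mul_zero, norm_zero]
      positivity

lemma alt_sum_choose_real (M : ℕ) :
    ∑ i ∈ range (M+1), ((-1:ℝ)^i * (M.choose i : ℝ)) = if M = 0 then 1 else 0 := by
  have h := Int.alternating_sum_range_choose (n := M)
  have h2 := congrArg (fun z : ℤ => (z : ℝ)) h
  rw [apply_ite (fun z : ℤ => (z : ℝ))] at h2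
  push_cast at h2
  exact h2

lemma FF_fiber_n (p k : ℕ) (x r : ℝ) (hr : 0 < r) (j l : ℕ) :
    HasSum (fun n => FF p k x r (n, j, l)) (TT p k x r j l) := by
  have hvanish : ∀ n ∉ range (k+l+1), FF p k x r (n, j, l) = 0 := by
    intro n hn
    simp only [mem_range, not_lt] at hn
    unfold FF gg
    simp only
    rw [if_neg (by omega)]
    simp
  have h := hasSum_sum_of_ne_finset_zero (L := SummationFilter.unconditional _) hvanish
  have hsum : ∑ n ∈ range (k+l+1), FF p k x r (n, j, l) = TT p k x r j l := by
    by_cases hj : j ≤ k + l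
    · set M := k + l - j with hM
      have hzero : ∀ n ∈ range j, FF p k x r (n, j, l) = 0 := by
        intro n hn
        simp only [mem_range] at hn
        unfold FF AA
        simp only
        rw [Nat.choose_eq_zero_of_lt hn]
        simp
      have hsplit : range (k+l+1) = Finset.Ico 0 j ∪ Finset.Ico j (k+l+1) := by
        rw [Finset.Ico_union_Ico_eq_Ico (by omega) (by omega), range_eq_Ico]
      rw [hsplit, Finset.sum_union (by
        apply Finset.Ico_disjoint_Ico_consecutive)]
      rw [← range_eq_Ico]
      rw [Finset.sum_eq_zero hzero, zero_add, Finset.sum_Ico_eq_sum_range]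
      have hrange : k + l + 1 - j = M + 1 := by omega
      rw [hrange]
      set K : ℝ := (-1:ℝ)^l * (p.choose j : ℝ) * (x*r)^(k+2*l) * ((r^2)⁻¹)^j /
        ((Nat.factorial l : ℝ) * (Nat.factorial M : ℝ)) with hK
      have hterm : ∀ i ∈ range (M+1), FF p k x r (j+i, j, l)
          = K * ((-1:ℝ)^i * (M.choose i : ℝ)) := by
        intro i hi
        simp only [mem_range] at hi
        have hiM : i ≤ M := by omega
        unfold FF AA gg
        simp only
        rw [if_pos (by omega)]
        have hc1 : ((j+i).choose j : ℝ) = ((j+i).factorial : ℝ) /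
            ((j.factorial : ℝ) * ((i).factorial : ℝ)) := by
          rw [Nat.cast_choose ℝ (Nat.le_add_right j i), Nat.add_sub_cancel_left]
        have hc2 : ((M).choose i : ℝ) = ((M).factorial : ℝ) /
            (((i).factorial : ℝ) * ((M-i).factorial : ℝ)) := Nat.cast_choose ℝ hiM
        have hfac2 : (Nat.factorial (k + l - (j+i)) : ℝ) = (Nat.factorial (M - i) : ℝ) := by
          congr 2
          omega
        have hpow : (x*r)^(k+2*l) = (x*r)^(j+i) * (x*r)^(k+2*l-(j+i)) := by
          rw [← pow_add]
          congr 1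
          omega
        have hneg : (-(x*r))^(j+i) = (-1:ℝ)^j * (-1:ℝ)^i * (x*r)^(j+i) := by
          rw [neg_pow, pow_add]
        have hneg2 : (-1/r^2)^j = (-1:ℝ)^j * ((r^2)⁻¹)^j := by
          rw [div_pow, neg_pow]
          ring
        rw [hc1, hc2, hfac2, hneg, hneg2, hK, hpow]
        have f1 : ((j+i).factorial : ℝ) ≠ 0 := by positivity
        have f2 : ((j).factorial : ℝ) ≠ 0 := by positivity
        have f3 : ((i).factorial : ℝ) ≠ 0 := by positivity
        have f4 : ((l).factorial : ℝ) ≠ 0 := by positivity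
        have f5 : ((M).factorial : ℝ) ≠ 0 := by positivity
        have f6 : ((M-i).factorial : ℝ) ≠ 0 := by positivity
        field_simp
        ring_nf
        rw [show ((-1:ℝ))^(j*2) = 1 from by rw [mul_comm, pow_mul, neg_one_sq, one_pow]]
        ring
      rw [Finset.sum_congr rfl hterm, ← Finset.mul_sum, alt_sum_choose_real]
      unfold TT
      by_cases hM0 : M = 0
      · rw [if_pos hM0, if_pos (by omega), hK, hM0]
        simp [Nat.factorial_zero]
      · rw [if_neg hM0, if_neg (by omega)]
        simp
    · push_neg at hj
      rw [Finset.sum_eq_zero, TT, if_neg (by omega)]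
      intro n hn
      simp only [mem_range] at hn
      unfold FF AA
      simp only
      rw [Nat.choose_eq_zero_of_lt (show n < j by omega)]
      simp
  rwa [hsum] at h

lemma FF_fiber_jl (p k : ℕ) (x r : ℝ) (hx : 0 < x) (hr : 0 < r) (n : ℕ) :
    HasSum (fun q : ℕ × ℕ => FF p k x r (n, q.1, q.2))
      ((-(x*r))^n / (Nat.factorial n : ℝ) * twoFzero p n (-1/r^2) *
        besselJint ((k:ℤ) - (n:ℤ)) (2*x*r)) := by
  have hA : HasSum (fun j => AA p x r n j)
      ((-(x*r))^n / (Nat.factorial n : ℝ) * twoFzero p n (-1/r^2)) := by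
    have hv : ∀ j ∉ range (min p n + 1), AA p x r n j = 0 := by
      intro j hj
      simp only [mem_range, not_lt] at hj
      unfold AA
      rcases le_total p n with h | h
      · rw [min_eq_left h] at hj
        rw [Nat.choose_eq_zero_of_lt (show p < j by omega)]
        simp
      · rw [min_eq_right h] at hj
        rw [Nat.choose_eq_zero_of_lt (show n < j by omega)]
        simp
    have h := hasSum_sum_of_ne_finset_zero (L := SummationFilter.unconditional _) hv
    have heq : ∑ j ∈ range (min p n + 1), AA p x r n j
        = (-(x*r))^n / (Nat.factorial n : ℝ) * twoFzero p n (-1/r^2) := by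
      unfold twoFzero AA
      rw [Finset.mul_sum]
    rwa [heq] at h
  have hG := gg_hasSum k x r n
  have hs : Summable (fun q : ℕ × ℕ => AA p x r n q.1 * gg k x r n q.2) := by
    have := (FF_summable p k hx hr).comp_injective
      (i := fun q : ℕ × ℕ => ((n, q.1, q.2) : ℕ × ℕ × ℕ))
      (by intro a b hab; simpa [Prod.ext_iff] using hab)
    exact this
  exact hA.mul hG hs

lemma TT_hasSum (m k : ℕ) (x r : ℝ) (hx : 0 < x) (hr : 0 < r) :
    HasSum (fun q : ℕ × ℕ => TT (m+k) k x r q.1 q.2)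
      ((Nat.factorial (m + k) : ℝ) / ((Nat.factorial m : ℝ) * (Nat.factorial k : ℝ)) *
        (x / r) ^ k * kummerPhi m k (x ^ 2)) := by
  have hinj : Function.Injective (fun l : ℕ => ((k + l, l) : ℕ × ℕ)) := by
    intro a b hab
    simpa using (Prod.ext_iff.mp hab).2
  have hvan : ∀ q ∉ Set.range (fun l : ℕ => ((k + l, l) : ℕ × ℕ)),
      (fun q : ℕ × ℕ => TT (m+k) k x r q.1 q.2) q = 0 := by
    rintro ⟨j, l⟩ hq
    simp only [Set.mem_range, not_exists] at hq
    unfold TT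
    simp only
    rw [if_neg]
    intro hkl
    exact hq l (by simp [Prod.ext_iff, hkl])
  rw [← Function.Injective.hasSum_iff hinj hvan]
  have hcomp : ((fun q : ℕ × ℕ => TT (m+k) k x r q.1 q.2) ∘ (fun l : ℕ => ((k + l, l) : ℕ × ℕ)))
      = fun l : ℕ => (-1:ℝ)^l * ((m+k).choose (k+l) : ℝ) * (x*r)^(k+2*l) * ((r^2)⁻¹)^(k+l) /
        (Nat.factorial l : ℝ) := by
    funext l
    show TT (m+k) k x r (k+l) l = _
    unfold TT
    rw [if_pos rfl]
  rw [hcomp]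
  have hv2 : ∀ l ∉ range (m+1),
      (-1:ℝ)^l * ((m+k).choose (k+l) : ℝ) * (x*r)^(k+2*l) * ((r^2)⁻¹)^(k+l) /
        (Nat.factorial l : ℝ) = 0 := by
    intro l hl
    simp only [mem_range, not_lt] at hl
    rw [Nat.choose_eq_zero_of_lt (by omega)]
    simp
  have h := hasSum_sum_of_ne_finset_zero (L := SummationFilter.unconditional _) hv2
  have hsum : ∑ l ∈ range (m+1),
      (-1:ℝ)^l * ((m+k).choose (k+l) : ℝ) * (x*r)^(k+2*l) * ((r^2)⁻¹)^(k+l) /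
        (Nat.factorial l : ℝ)
      = (Nat.factorial (m + k) : ℝ) / ((Nat.factorial m : ℝ) * (Nat.factorial k : ℝ)) *
        (x / r) ^ k * kummerPhi m k (x ^ 2) := by
    unfold kummerPhi
    rw [Finset.mul_sum]
    apply Finset.sum_congr rfl
    intro l hl
    simp only [mem_range] at hl
    have hlm : l ≤ m := by omega
    have hP : (ascPochhammer ℝ l).eval ((k : ℝ) + 1)
        = ((k+l).factorial : ℝ) / (k.factorial : ℝ) := by
      have h1 : (((ascPochhammer ℕ l).eval (k+1) : ℕ) : ℝ) = (ascPochhammer ℝ l).eval ((k:ℝ)+1) := by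
        have := ascPochhammer_eval_cast ℝ l (k+1)
        rw [this]
        push_cast
        rfl
      rw [← h1, ascPochhammer_nat_eq_ascFactorial]
      rw [eq_div_iff (by positivity)]
      rw [← Nat.cast_mul, mul_comm, Nat.factorial_mul_ascFactorial]
    have hc1 : (((m+k)).choose (k+l) : ℝ) = (((m+k)).factorial : ℝ) /
        (((k+l).factorial : ℝ) * ((m-l).factorial : ℝ)) := by
      rw [Nat.cast_choose ℝ (show k + l ≤ m + k by omega),
        show m + k - (k + l) = m - l from by omega]
    have hc2 : ((m).choose l : ℝ) = ((m).factorial : ℝ) /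
        ((l.factorial : ℝ) * ((m-l).factorial : ℝ)) := Nat.cast_choose ℝ hlm
    have hpow1 : (x*r)^(k+2*l) = x^k * (x^2)^l * (r^(k+2*l)) := by
      rw [mul_pow, ← pow_mul, ← pow_add]
    have hpow2 : ((r^2)⁻¹)^(k+l) = (r^(2*(k+l)))⁻¹ := by
      rw [inv_pow, ← pow_mul]
    have hpow3 : r^(2*(k+l)) = r^(k+2*l) * r^k := by
      rw [← pow_add]
      congr 1
      omega
    rw [hP, hc1, hc2, hpow1, hpow2, hpow3]
    have f1 : ((k+l).factorial : ℝ) ≠ 0 := by positivity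
    have f2 : ((m-l).factorial : ℝ) ≠ 0 := by positivity
    have f3 : ((l).factorial : ℝ) ≠ 0 := by positivity
    have f4 : ((k).factorial : ℝ) ≠ 0 := by positivity
    have f5 : ((m).factorial : ℝ) ≠ 0 := by positivity
    have hrk : r^(k+2*l) ≠ 0 := by positivity
    have hrk2 : r^k ≠ 0 := by positivity
    have hxr : x / r = x * r⁻¹ := div_eq_mul_inv x r
    field_simp
    ring_nf
    rw [mul_assoc, ← mul_pow, mul_inv_cancel₀ hr.ne', one_pow, mul_one]
  rwa [hsum] at h

/-- reordering equivalence -/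
def reorderEquiv : (ℕ × ℕ) × ℕ ≃ ℕ × ℕ × ℕ :=
  ⟨fun q => (q.2, q.1.1, q.1.2), fun q => ((q.2.1, q.2.2), q.1),
    fun _ => rfl, fun _ => rfl⟩

end AdditionAux

open AdditionAux in
theorem addition_theorem_identity (m k : ℕ) (x r : ℝ) (hx : 0 < x) (hr : 0 < r) :
    HasSum
      (fun n : ℕ =>
        (-(x * r)) ^ n / (Nat.factorial n : ℝ) * twoFzero (m + k) n (-1 / r ^ 2) *
          besselJint ((k : ℤ) - (n : ℤ)) (2 * x * r))
      ((Nat.factorial (m + k) : ℝ) /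
          ((Nat.factorial m : ℝ) * (Nat.factorial k : ℝ)) *
        (x / r) ^ k * kummerPhi m k (x ^ 2)) := by
  have hFs := FF_summable (m+k) k hx hr
  have hFF := hFs.hasSum
  have hLHS : HasSum (fun n : ℕ => (-(x*r))^n / (Nat.factorial n : ℝ) *
      twoFzero (m+k) n (-1/r^2) * besselJint ((k:ℤ)-(n:ℤ)) (2*x*r))
      (∑' q, FF (m+k) k x r q) :=
    hFF.prod_fiberwise (fun n => FF_fiber_jl (m+k) k x r hx hr n)
  have hFF2 : HasSum (FF (m+k) k x r ∘ reorderEquiv) (∑' q, FF (m+k) k x r q) :=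
    (Equiv.hasSum_iff reorderEquiv).mpr hFF
  have hTT : HasSum (fun q : ℕ × ℕ => TT (m+k) k x r q.1 q.2) (∑' q, FF (m+k) k x r q) :=
    hFF2.prod_fiberwise (fun jl => FF_fiber_n (m+k) k x r hr jl.1 jl.2)
  have hRHS := TT_hasSum m k x r hx hr
  have heq : (∑' q, FF (m+k) k x r q)
      = (Nat.factorial (m + k) : ℝ) / ((Nat.factorial m : ℝ) * (Nat.factorial k : ℝ)) *
        (x / r) ^ k * kummerPhi m k (x ^ 2) :=
    hTT.unique hRHS
  rw [heq] at hLHS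
  exact hLHS
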